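/- Let u, ũ > 0, and suppose ũ = 1 − m/r + O(r^{−2+ε}) and |∇̃f̃|²_{g₂} = r² + 4m√(1+r²) + O(r^ε) as r → ∞. Then u := ũ √(1 + ũ² |∇̃f̃|²_{g₂}) satisfies u = √(1+r²) + O(r^{−1+ε}). -/

import Mathlib

/-!
Squaring twice, `ũ⁴ = 1 - 4m/r + O(r^{-2+ε})`, while `|∇̃f̃|² = r² + 4mr + O(r^ε)` since
`√(1+r²) = r + O(1/r)`; the mass terms cancel in `ũ⁴|∇̃f̃|²`, so `u² = 1 + r² + O(r^ε)`.
Dividing `u² - (1 + r²)` by `u + √(1+r²) ≥ r` gives the claim.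
-/

open Filter Asymptotics

lemma isBigO_rpow_rpow_atTop_of_le {a b : ℝ} (hab : a ≤ b) :
    (fun r : ℝ => r ^ a) =O[atTop] fun r => r ^ b := by
  refine IsBigO.of_bound 1 ?_
  filter_upwards [eventually_ge_atTop 1] with r hr
  rw [one_mul, Real.norm_of_nonneg (by positivity), Real.norm_of_nonneg (by positivity)]
  exact Real.rpow_le_rpow_of_exponent_le hr hab

lemma Asymptotics.IsBigO.mono_rpow_exponent {f : ℝ → ℝ} {a b : ℝ}
    (hf : f =O[atTop] fun r => r ^ a) (hab : a ≤ b) : f =O[atTop] fun r => r ^ b :=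
  hf.trans (isBigO_rpow_rpow_atTop_of_le hab)

lemma isBigO_const_rpow_atTop (c : ℝ) {a : ℝ} (ha : 0 ≤ a) :
    (fun _ : ℝ => c) =O[atTop] fun r => r ^ a :=
  ((isBigO_const_const c one_ne_zero atTop).congr_right fun r => (Real.rpow_zero r).symm)
    |>.mono_rpow_exponent ha

lemma isBigO_const_div_rpow_neg_one_atTop (c : ℝ) :
    (fun r : ℝ => c / r) =O[atTop] fun r => r ^ (-1 : ℝ) := by
  simpa only [Real.rpow_neg_one, div_eq_mul_inv] using
    (isBigO_refl (fun r : ℝ => r⁻¹) atTop).const_mul_left c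

lemma isBigO_one_sub_const_div_atTop (a : ℝ) :
    (fun r : ℝ => 1 - a / r) =O[atTop] fun r => r ^ (0 : ℝ) :=
  (isBigO_const_rpow_atTop 1 le_rfl).sub
    ((isBigO_const_div_rpow_neg_one_atTop a).mono_rpow_exponent (by norm_num))

lemma le_sqrt_one_add_sq (r : ℝ) : r ≤ √(1 + r ^ 2) :=
  (le_abs_self r).trans (Real.abs_le_sqrt (by linarith))

lemma sqrt_one_add_sq_sub_self_isBigO :
    (fun r : ℝ => √(1 + r ^ 2) - r) =O[atTop] fun r => r ^ (-1 : ℝ) := by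
  refine IsBigO.of_bound 1 ?_
  filter_upwards [eventually_gt_atTop 0] with r hr
  have hsq : √(1 + r ^ 2) ^ 2 = 1 + r ^ 2 := Real.sq_sqrt (by positivity)
  rw [one_mul, Real.rpow_neg_one, Real.norm_of_nonneg (sub_nonneg.2 (le_sqrt_one_add_sq r)),
    Real.norm_of_nonneg (inv_nonneg.2 hr.le), ← one_div, le_div_iff₀ hr]
  -- `(√(1+r²) - r) (√(1+r²) + r) = 1`
  nlinarith [le_sqrt_one_add_sq r]

lemma sq_sub_one_sub_div_isBigO {x : ℝ → ℝ} {a p : ℝ} (hp₂ : -2 ≤ p) (hp₀ : p ≤ 0)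
    (hx : (fun r => x r - (1 - a / r)) =O[atTop] fun r => r ^ p) :
    (fun r => x r ^ 2 - (1 - 2 * a / r)) =O[atTop] fun r => r ^ p := by
  have hbdd : (fun r => x r - (1 - a / r) + 2 * (1 - a / r)) =O[atTop] fun r => r ^ (0 : ℝ) :=
    (hx.mono_rpow_exponent hp₀).add ((isBigO_one_sub_const_div_atTop a).const_mul_left 2)
  have hsq : (fun r => (a / r) ^ 2) =O[atTop] fun r => r ^ p :=
    ((isBigO_const_div_rpow_neg_one_atTop a).mul_atTop_rpow_of_isBigO_rpow _ _ _
      (isBigO_const_div_rpow_neg_one_atTop a) (by linarith)).congr_left fun r => (sq _).symm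
  refine ((hx.mul_atTop_rpow_of_isBigO_rpow _ _ _ hbdd (by linarith)).add hsq).congr_left ?_
  intro r
  simp only [Pi.mul_apply]
  ring

lemma mul_sub_sq_isBigO {w F : ℝ → ℝ} {a q : ℝ} (hq₀ : 0 ≤ q) (hq₂ : q ≤ 2)
    (hw : (fun r => w r - (1 - a / r)) =O[atTop] fun r => r ^ (-2 + q))
    (hF : (fun r => F r - (r ^ 2 + a * √(1 + r ^ 2))) =O[atTop] fun r => r ^ q) :
    (fun r => w r * F r - r ^ 2) =O[atTop] fun r => r ^ q := by
  have hF₁ : (fun r => F r - (r ^ 2 + a * r)) =O[atTop] fun r => r ^ q :=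
    (hF.add ((sqrt_one_add_sq_sub_self_isBigO.mono_rpow_exponent (by linarith)).const_mul_left
      a)).congr_left fun r => by ring
  have hF₂ : F =O[atTop] fun r => r ^ (2 : ℝ) := by
    have hsq : (fun r : ℝ => r ^ 2) =O[atTop] fun r => r ^ (2 : ℝ) :=
      (isBigO_refl _ _).congr_right fun r => (Real.rpow_two r).symm
    have hlin : (fun r : ℝ => a * r) =O[atTop] fun r => r ^ (2 : ℝ) :=
      (((isBigO_refl _ _).congr_right fun r => (Real.rpow_one r).symm).mono_rpow_exponent
        (by norm_num)).const_mul_left a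
    exact ((hF₁.mono_rpow_exponent hq₂).add (hsq.add hlin)).congr_left fun r => by ring
  have hsum := ((hw.mul_atTop_rpow_of_isBigO_rpow _ _ _ hF₂ (by linarith)).add
    ((isBigO_one_sub_const_div_atTop a).mul_atTop_rpow_of_isBigO_rpow _ _ _ hF₁ (by linarith))).sub
    (isBigO_const_rpow_atTop (a ^ 2) hq₀)
  refine hsum.congr' ?_ EventuallyEq.rfl
  filter_upwards [eventually_ne_atTop 0] with r hr
  simp only [Pi.mul_apply]
  field_simp
  ring

lemma sub_sqrt_one_add_sq_isBigO {v : ℝ → ℝ} {q : ℝ} (hv : ∀ᶠ r in atTop, 0 ≤ v r)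
    (h : (fun r => v r ^ 2 - (1 + r ^ 2)) =O[atTop] fun r => r ^ q) :
    (fun r => v r - √(1 + r ^ 2)) =O[atTop] fun r => r ^ (-1 + q) := by
  refine IsBigO.trans ?_ (h.mul_atTop_rpow_of_isBigO_rpow _ _ _
    (isBigO_const_div_rpow_neg_one_atTop 1) (by linarith))
  refine IsBigO.of_bound 1 ?_
  filter_upwards [hv, eventually_gt_atTop 0] with r hv hr
  have hsq : √(1 + r ^ 2) ^ 2 = 1 + r ^ 2 := Real.sq_sqrt (by positivity)
  have hfac : |v r ^ 2 - (1 + r ^ 2)| = |v r - √(1 + r ^ 2)| * (v r + √(1 + r ^ 2)) := by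
    rw [← abs_of_nonneg (by linarith [le_sqrt_one_add_sq r] : 0 ≤ v r + √(1 + r ^ 2)), ← abs_mul]
    congr 1
    linear_combination hsq
  rw [one_mul, Pi.mul_apply, norm_mul, Real.norm_of_nonneg (one_div_nonneg.2 hr.le), mul_one_div,
    le_div_iff₀ hr, Real.norm_eq_abs, Real.norm_eq_abs, hfac]
  exact mul_le_mul_of_nonneg_left (by linarith [le_sqrt_one_add_sq r]) (abs_nonneg _)

/-- Asymptotic computation (4.16): if `ũ = 1 − m/r + O(r^{−2+ε})` and
`|∇̃f̃|²_{g₂} = r² + 4m√(1+r²) + O(r^ε)`, then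
`u = ũ√(1 + ũ²|∇̃f̃|²)` satisfies `u = √(1+r²) + O(r^{−1+ε})`. -/
theorem stmt16 (utld F : ℝ → ℝ) (m ε : ℝ) (hε : 0 < ε) (hε1 : ε < 1)
    (hupos : ∀ r, 0 < utld r) (hFnn : ∀ r, 0 ≤ F r)
    (hu : (fun r => utld r - (1 - m / r)) =O[atTop] fun r : ℝ => r ^ (-2 + ε))
    (hF : (fun r => F r - (r ^ 2 + 4 * m * Real.sqrt (1 + r ^ 2))) =O[atTop]
      fun r : ℝ => r ^ ε) :
    (fun r => utld r * Real.sqrt (1 + utld r ^ 2 * F r) - Real.sqrt (1 + r ^ 2))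
      =O[atTop] fun r : ℝ => r ^ (-1 + ε) := by
  have hu₂ := sq_sub_one_sub_div_isBigO (by linarith) (by linarith) hu
  have hu₄ : (fun r => utld r ^ 4 - (1 - 4 * m / r)) =O[atTop] fun r => r ^ (-2 + ε) :=
    (sq_sub_one_sub_div_isBigO (by linarith) (by linarith) hu₂).congr_left fun r => by ring
  have hu₂_one : (fun r => utld r ^ 2 - 1) =O[atTop] fun r => r ^ ε :=
    ((hu₂.mono_rpow_exponent (by linarith)).sub
      ((isBigO_const_div_rpow_neg_one_atTop (2 * m)).mono_rpow_exponent (by linarith))).congr_left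
      fun r => by ring
  have hsq : (fun r => (utld r * √(1 + utld r ^ 2 * F r)) ^ 2 - (1 + r ^ 2))
      =O[atTop] fun r => r ^ ε := by
    refine (hu₂_one.add (mul_sub_sq_isBigO hε.le (by linarith) hu₄ hF)).congr_left fun r => ?_
    rw [mul_pow, Real.sq_sqrt (add_nonneg zero_le_one (mul_nonneg (sq_nonneg _) (hFnn r)))]
    ring
  exact sub_sqrt_one_add_sq_isBigO
    (.of_forall fun r => mul_nonneg (hupos r).le (Real.sqrt_nonneg _)) hsq
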